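/- arXiv:2206.12245 — 7 statements merged into one kernel-verified Lean document; each statement's English description precedes it below -/
import Mathlib

section
/- Let G = (V,E) be a graph, k a positive integer, and F the set of all edges that lie in some edge cut of G of size at most k. Define f_F(S) = min(k, |δ_G(S)|) − |δ_G(S) ∩ F| for S ⊆ V. If H is a subgraph of G such that for every fault set A ⊆ E with |A| < k, any two vertices connected in G \ A are also connected in H \ A, then for every S ⊆ V the number of edges of H crossing the cut (S, V\S) is at least min(k, |δ_G(S)|). -/
open SimpleGraph

/-- The edge boundary of `S`: edges of `G` with exactly one endpoint in `S`. -/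
def cutEdges {V : Type*} (G : SimpleGraph V) (S : Set V) : Set (Sym2 V) :=
  {e | e ∈ G.edgeSet ∧ ∃ u v, e = s(u, v) ∧ u ∈ S ∧ v ∉ S}

/-- Any walk in `fromEdgeSet E'` from inside `S` to outside `S` uses a crossing edge. -/
lemma crossing_of_walk {V : Type*} {E' : Set (Sym2 V)} {S : Set V} :
    ∀ {u v : V}, (fromEdgeSet E').Walk u v → u ∈ S → v ∉ S →
      ∃ a b, s(a, b) ∈ E' ∧ a ∈ S ∧ b ∉ S := by
  intro u v w
  induction w with
  | nil => intro hu hv; exact absurd hu hv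
  | @cons a b c hab _ ih =>
    intro hu hv
    by_cases hb : b ∈ S
    · exact ih hb hv
    · exact ⟨a, b, ((fromEdgeSet_adj _).mp hab).1, hu, hb⟩

/-- A `k`-EFTS `H` of `G` must contain at least `min k |δ_G(S)|` edges of every cut. -/
theorem stmt0 {V : Type*} [Fintype V] (G : SimpleGraph V) (k : ℕ) (hk : 0 < k)
    (F : Set (Sym2 V))
    (hF : F = {e | e ∈ G.edgeSet ∧ ∃ S : Set V, e ∈ cutEdges G S ∧ (cutEdges G S).ncard ≤ k})
    (fF : Set V → ℤ)
    (hfF : ∀ S : Set V,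
      fF S = (min k (cutEdges G S).ncard : ℤ) - ((cutEdges G S ∩ F).ncard : ℤ))
    (H : Set (Sym2 V)) (hH : H ⊆ G.edgeSet)
    (hEFTS : ∀ A ⊆ G.edgeSet, A.ncard < k → ∀ u v : V,
      (fromEdgeSet (G.edgeSet \ A)).Reachable u v →
      (fromEdgeSet (H \ A)).Reachable u v) :
    ∀ S : Set V, min k (cutEdges G S).ncard ≤ (H ∩ cutEdges G S).ncard := by
  intro S
  by_contra hcon
  push_neg at hcon
  set A := H ∩ cutEdges G S with hA
  have hAsub : A ⊆ G.edgeSet := fun e he => hH he.1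
  have hAlt : A.ncard < k := lt_of_lt_of_le hcon (min_le_left _ _)
  have hAltδ : A.ncard < (cutEdges G S).ncard := lt_of_lt_of_le hcon (min_le_right _ _)
  have hAδ : A ⊆ cutEdges G S := Set.inter_subset_right
  have hss : A ⊂ cutEdges G S := by
    refine ⟨hAδ, fun h => ?_⟩
    have := Set.ncard_le_ncard h (Set.toFinite _)
    omega
  obtain ⟨e, heδ, heA⟩ := Set.exists_of_ssubset hss
  obtain ⟨heG, u, v, rfl, hu, hv⟩ := heδ
  have huv : u ≠ v := fun h => hv (h ▸ hu)
  have hadj : (fromEdgeSet (G.edgeSet \ A)).Adj u v :=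
    (fromEdgeSet_adj _).mpr ⟨⟨heG, heA⟩, huv⟩
  have hreach := hEFTS A hAsub hAlt u v hadj.reachable
  obtain ⟨w⟩ := hreach
  obtain ⟨a, b, ⟨habH, habA⟩, haS, hbS⟩ := crossing_of_walk w hu hv
  exact habA ⟨habH, hH habH, a, b, rfl, haS, hbS⟩
end

section
/- Let G = (V,E), k ∈ ℕ, F' ⊆ E, and for S ⊆ V call S an empty cut if δ_G(S) ⊆ F'. Suppose every cut of size at most k is empty (i.e., F' contains all edges in cuts of size ≤ k). If A, B ⊆ V are both nonempty cuts (not empty cuts), then either both A \ B and B \ A are nonempty cuts, or both A ∩ B and A ∪ B are nonempty cuts. -/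
open SimpleGraph

lemma cutEdges_diff_inter {V : Type*} (G : SimpleGraph V) (A B : Set V) {e : Sym2 V}
    (he : e ∈ cutEdges G A) :
    e ∈ cutEdges G (A \ B) ∨ e ∈ cutEdges G (A ∩ B) := by
  obtain ⟨hE, u, v, rfl, hu, hv⟩ := he
  by_cases hub : u ∈ B
  · exact Or.inr ⟨hE, u, v, rfl, ⟨hu, hub⟩, fun h => hv h.1⟩
  · exact Or.inl ⟨hE, u, v, rfl, ⟨hu, hub⟩, fun h => hv h.1⟩

lemma cutEdges_sdiff_union {V : Type*} (G : SimpleGraph V) (A B : Set V) {e : Sym2 V}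
    (he : e ∈ cutEdges G A) :
    e ∈ cutEdges G (B \ A) ∨ e ∈ cutEdges G (A ∪ B) := by
  obtain ⟨hE, u, v, rfl, hu, hv⟩ := he
  by_cases hvb : v ∈ B
  · exact Or.inl ⟨hE, v, u, Sym2.eq_swap, ⟨hvb, hv⟩, fun h => h.2 hu⟩
  · exact Or.inr ⟨hE, u, v, rfl, Or.inl hu, fun h => h.elim hv hvb⟩

/-- If `A` and `B` are nonempty cuts w.r.t. `F'` (i.e. `δ_G(A) ⊄ F'`, `δ_G(B) ⊄ F'`),
then either both `A \ B` and `B \ A` are nonempty cuts, or both `A ∩ B` and `A ∪ B` are. -/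
theorem stmt2 {V : Type*} [Fintype V] (G : SimpleGraph V) (k : ℕ) (F' : Set (Sym2 V))
    (hsmall : ∀ S : Set V, (cutEdges G S).ncard ≤ k → cutEdges G S ⊆ F')
    (A B : Set V)
    (hA : ¬ cutEdges G A ⊆ F') (hB : ¬ cutEdges G B ⊆ F') :
    (¬ cutEdges G (A \ B) ⊆ F' ∧ ¬ cutEdges G (B \ A) ⊆ F') ∨
    (¬ cutEdges G (A ∩ B) ⊆ F' ∧ ¬ cutEdges G (A ∪ B) ⊆ F') := by
  obtain ⟨e, heA, heF⟩ := Set.not_subset.mp hA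
  obtain ⟨f, hfB, hfF⟩ := Set.not_subset.mp hB
  by_contra hcon
  have h1 : cutEdges G (A \ B) ⊆ F' ∨ cutEdges G (B \ A) ⊆ F' := by tauto
  have h2 : cutEdges G (A ∩ B) ⊆ F' ∨ cutEdges G (A ∪ B) ⊆ F' := by tauto
  have he1 := cutEdges_diff_inter G A B heA
  have he2 := cutEdges_sdiff_union G A B heA
  have hf1 := cutEdges_diff_inter G B A hfB
  rw [Set.inter_comm B A] at hf1
  have hf2 := cutEdges_sdiff_union G B A hfB
  rw [Set.union_comm B A] at hf2
  rcases h1 with hD | hD <;> rcases h2 with hC | hC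
  · exact heF (he1.elim (fun h => hD h) (fun h => hC h))
  · exact hfF (hf2.elim (fun h => hD h) (fun h => hC h))
  · exact hfF (hf1.elim (fun h => hD h) (fun h => hC h))
  · exact heF (he2.elim (fun h => hD h) (fun h => hC h))
end

section
/- Let G = (V,E), k ∈ ℕ, and F' ⊆ E containing every edge that lies in a cut of size at most k. Define f_{F'}(S) = min(k, |δ_G(S)|) − |δ_G(S) ∩ F'|. Then f_{F'} is locally weakly supermodular with respect to F': for all A, B ⊆ V such that both δ_G(A) ⊄ F' and δ_G(B) ⊄ F' (both are nonempty cuts), either f_{F'}(A) + f_{F'}(B) ≤ f_{F'}(A\B) + f_{F'}(B\A), or f_{F'}(A) + f_{F'}(B) ≤ f_{F'}(A∩B) + f_{F'}(A∪B). -/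
open SimpleGraph
open scoped Classical

lemma mem_cutEdges {V : Type*} (G : SimpleGraph V) (S : Set V) (u v : V) :
    s(u, v) ∈ cutEdges G S ↔ s(u, v) ∈ G.edgeSet ∧ ((u ∈ S ∧ v ∉ S) ∨ (v ∈ S ∧ u ∉ S)) := by
  constructor
  · rintro ⟨he, a, b, hab, h1, h2⟩
    refine ⟨he, ?_⟩
    rw [Sym2.eq_iff] at hab
    rcases hab with ⟨rfl, rfl⟩ | ⟨rfl, rfl⟩
    · exact Or.inl ⟨h1, h2⟩
    · exact Or.inr ⟨h1, h2⟩
  · rintro ⟨he, ⟨h1, h2⟩ | ⟨h1, h2⟩⟩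
    · exact ⟨he, u, v, rfl, h1, h2⟩
    · exact ⟨he, v, u, Sym2.eq_swap, h1, h2⟩

lemma card_pair_le {α : Type*} [Fintype α] (S1 S2 T1 T2 : Set α)
    (h : ∀ e, (if e ∈ S1 then 1 else 0) + (if e ∈ S2 then 1 else 0)
        ≤ (if e ∈ T1 then (1:ℕ) else 0) + (if e ∈ T2 then 1 else 0)) :
    S1.ncard + S2.ncard ≤ T1.ncard + T2.ncard := by
  classical
  have hc : ∀ S : Set α, S.ncard = ∑ e, (if e ∈ S then 1 else 0) := by
    intro S
    rw [Set.ncard_eq_toFinset_card' S, ← Set.filter_mem_univ_eq_toFinset, Finset.card_filter]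
  simp only [hc, ← Finset.sum_add_distrib]
  exact Finset.sum_le_sum fun e _ => h e

lemma cut_split_diff_inter {V : Type*} (G : SimpleGraph V) (A B : Set V) :
    cutEdges G A ⊆ cutEdges G (A \ B) ∪ cutEdges G (A ∩ B) := by
  intro e
  induction e using Sym2.inductionOn with
  | hf u v =>
    simp only [Set.mem_union, mem_cutEdges, Set.mem_diff, Set.mem_inter_iff]
    tauto

lemma cut_split_diff_union {V : Type*} (G : SimpleGraph V) (A B : Set V) :
    cutEdges G A ⊆ cutEdges G (B \ A) ∪ cutEdges G (A ∪ B) := by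
  intro e
  induction e using Sym2.inductionOn with
  | hf u v =>
    simp only [Set.mem_union, mem_cutEdges, Set.mem_diff]
    tauto

lemma pt_diff {V : Type*} (G : SimpleGraph V) (F' : Set (Sym2 V)) (A B : Set V) :
    ∀ e, (if e ∈ cutEdges G (A \ B) ∩ F' then 1 else 0)
        + (if e ∈ cutEdges G (B \ A) ∩ F' then 1 else 0)
      ≤ (if e ∈ cutEdges G A ∩ F' then (1:ℕ) else 0)
        + (if e ∈ cutEdges G B ∩ F' then 1 else 0) := by
  intro e
  induction e using Sym2.inductionOn with
  | hf u v =>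
    by_cases he : s(u,v) ∈ G.edgeSet <;>
    by_cases hf : s(u,v) ∈ F' <;>
    by_cases h1 : u ∈ A <;> by_cases h2 : v ∈ A <;>
    by_cases h3 : u ∈ B <;> by_cases h4 : v ∈ B <;>
    simp [Set.mem_inter_iff, mem_cutEdges, Set.mem_diff, he, hf, h1, h2, h3, h4]

lemma pt_inter_union {V : Type*} (G : SimpleGraph V) (F' : Set (Sym2 V)) (A B : Set V) :
    ∀ e, (if e ∈ cutEdges G (A ∩ B) ∩ F' then 1 else 0)
        + (if e ∈ cutEdges G (A ∪ B) ∩ F' then 1 else 0)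
      ≤ (if e ∈ cutEdges G A ∩ F' then (1:ℕ) else 0)
        + (if e ∈ cutEdges G B ∩ F' then 1 else 0) := by
  intro e
  induction e using Sym2.inductionOn with
  | hf u v =>
    by_cases he : s(u,v) ∈ G.edgeSet <;>
    by_cases hf : s(u,v) ∈ F' <;>
    by_cases h1 : u ∈ A <;> by_cases h2 : v ∈ A <;>
    by_cases h3 : u ∈ B <;> by_cases h4 : v ∈ B <;>
    simp [Set.mem_inter_iff, mem_cutEdges, Set.mem_diff, Set.mem_union,
      he, hf, h1, h2, h3, h4]

/-- Local weak supermodularity of the cut requirement function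
`f_{F'}(S) = min(k, |δ_G(S)|) − |δ_G(S) ∩ F'|`, for `F'` containing every edge lying in
a cut of size at most `k`: for nonempty cuts `A`, `B`, one of the two uncrossing
inequalities holds. -/
theorem stmt3 {V : Type*} [Fintype V] (G : SimpleGraph V) (k : ℕ) (F' : Set (Sym2 V))
    (hsmall : ∀ S : Set V, (cutEdges G S).ncard ≤ k → cutEdges G S ⊆ F')
    (fF : Set V → ℤ)
    (hfF : ∀ S : Set V,
      fF S = (min k (cutEdges G S).ncard : ℤ) - ((cutEdges G S ∩ F').ncard : ℤ))
    (A B : Set V) (hA : ¬ cutEdges G A ⊆ F') (hB : ¬ cutEdges G B ⊆ F') :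
    fF A + fF B ≤ fF (A \ B) + fF (B \ A) ∨
    fF A + fF B ≤ fF (A ∩ B) + fF (A ∪ B) := by
  classical
  have hmin : ∀ S : Set V, ¬ cutEdges G S ⊆ F' →
      min (k : ℤ) ((cutEdges G S).ncard : ℤ) = k := by
    intro S hS
    have h1 : ¬ (cutEdges G S).ncard ≤ k := fun h => hS (hsmall S h)
    have h2 : (k : ℤ) ≤ ((cutEdges G S).ncard : ℤ) := by exact_mod_cast Nat.le_of_lt (Nat.lt_of_not_le h1)
    exact min_eq_left h2
  have key : ∀ P Q : Set V, ¬ cutEdges G P ⊆ F' → ¬ cutEdges G Q ⊆ F' →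
      (∀ e, (if e ∈ cutEdges G P ∩ F' then 1 else 0)
          + (if e ∈ cutEdges G Q ∩ F' then 1 else 0)
        ≤ (if e ∈ cutEdges G A ∩ F' then (1:ℕ) else 0)
          + (if e ∈ cutEdges G B ∩ F' then 1 else 0)) →
      fF A + fF B ≤ fF P + fF Q := by
    intro P Q hP hQ hpt
    have hcard := card_pair_le (cutEdges G P ∩ F') (cutEdges G Q ∩ F')
      (cutEdges G A ∩ F') (cutEdges G B ∩ F') (fun e => by convert hpt e using 3)
    rw [hfF A, hfF B, hfF P, hfF Q, hmin A hA, hmin B hB, hmin P hP, hmin Q hQ]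
    have : ((cutEdges G P ∩ F').ncard : ℤ) + ((cutEdges G Q ∩ F').ncard : ℤ)
        ≤ ((cutEdges G A ∩ F').ncard : ℤ) + ((cutEdges G B ∩ F').ncard : ℤ) := by
      exact_mod_cast hcard
    linarith
  obtain ⟨ea, heaA, heaF⟩ := Set.not_subset.mp hA
  obtain ⟨eb, hebB, hebF⟩ := Set.not_subset.mp hB
  by_cases hd1 : cutEdges G (A \ B) ⊆ F'
  · -- ea ∈ δ(A∩B), eb ∈ δ(A∪B): the ∩/∪ pair works
    have hea : ea ∈ cutEdges G (A ∩ B) := by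
      rcases cut_split_diff_inter G A B heaA with h | h
      · exact absurd (hd1 h) heaF
      · exact h
    have heb : eb ∈ cutEdges G (A ∪ B) := by
      have hsub : cutEdges G B ⊆ cutEdges G (A \ B) ∪ cutEdges G (A ∪ B) := by
        have := cut_split_diff_union G B A
        simpa [Set.union_comm B A] using this
      rcases hsub hebB with h | h
      · exact absurd (hd1 h) hebF
      · exact h
    exact Or.inr (key (A ∩ B) (A ∪ B)
      (Set.not_subset.mpr ⟨ea, hea, heaF⟩) (Set.not_subset.mpr ⟨eb, heb, hebF⟩)
      (pt_inter_union G F' A B))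
  · by_cases hd2 : cutEdges G (B \ A) ⊆ F'
    · -- ea ∈ δ(A∪B), eb ∈ δ(A∩B): the ∩/∪ pair works
      have hea : ea ∈ cutEdges G (A ∪ B) := by
        rcases cut_split_diff_union G A B heaA with h | h
        · exact absurd (hd2 h) heaF
        · exact h
      have heb : eb ∈ cutEdges G (A ∩ B) := by
        have hsub : cutEdges G B ⊆ cutEdges G (B \ A) ∪ cutEdges G (A ∩ B) := by
          have := cut_split_diff_inter G B A
          simpa [Set.inter_comm B A] using this
        rcases hsub hebB with h | h
        · exact absurd (hd2 h) hebF
        · exact h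
      exact Or.inr (key (A ∩ B) (A ∪ B)
        (Set.not_subset.mpr ⟨eb, heb, hebF⟩) (Set.not_subset.mpr ⟨ea, hea, heaF⟩)
        (pt_inter_union G F' A B))
    · exact Or.inl (key (A \ B) (B \ A) hd1 hd2 (pt_diff G F' A B))
end

section
/- Let G = (V,E), k ∈ ℕ, F' ⊇ F (F the set of edges in cuts of size ≤ k). Let x : E\F' → [0,1] be an integral solution (x_e ∈ {0,1}) satisfying Σ_{e ∈ δ_G(S)\F'} x_e ≥ f_{F'}(S) for all S ⊆ V, where f_{F'}(S) = min(k,|δ_G(S)|) − |δ_G(S) ∩ F'|. Then H = {e : x_e = 1} ∪ F' is a k-EFTS of G: for every A ⊆ E with |A| < k, any two vertices connected in G \ A are connected in H \ A. -/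
/-!
Suppose `u` and `v` are joined in `G \ A` but not in `H \ A`, and let `S` be the set of vertices
reachable from `u` in `H \ A`. No edge of `δ(S)` lies in `H \ A`, while the `u`–`v` path in
`G \ A` crosses `δ(S)` outside `A`. If `|δ(S)| ≤ k`, that crossing edge lies in `F' ⊆ H`, which is
absurd. Otherwise the constraint for `S` reads
`k ≤ |δ(S) ∩ F'| + #{e ∈ δ(S) \ F' | x e = 1} = |δ(S) ∩ H| ≤ |A| < k`.
-/

open SimpleGraph

theorem finsum_mem_eq_ncard_of_forall_eq_zero_or_one {α R : Type*} [AddCommMonoidWithOne R]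
    {s : Set α} (hs : s.Finite) {f : α → R} (hf : ∀ a ∈ s, f a = 0 ∨ f a = 1) :
    ∑ᶠ a ∈ s, f a = (s ∩ {a | f a = 1}).ncard := by
  have hzero : ∑ᶠ a ∈ s \ {a | f a = 1}, f a = 0 :=
    finsum_mem_eq_zero_of_forall_eq_zero fun a ha => (hf a ha.1).resolve_right ha.2
  have hone : ∑ᶠ a ∈ s ∩ {a | f a = 1}, f a = ∑ᶠ a ∈ s ∩ {a | f a = 1}, (1 : R) :=
    finsum_mem_congr rfl fun a ha => ha.2
  rw [← finsum_mem_inter_add_sdiff {a | f a = 1} hs, hzero, add_zero, hone,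
    finsum_mem_eq_finite_toFinset_sum _ (hs.inter_of_left _), Set.ncard_eq_toFinset_card _
      (hs.inter_of_left _)]
  simp

namespace SimpleGraph

variable {V : Type*} (G : SimpleGraph V)

theorem exists_mem_cutEdges_of_reachable {A : Set (Sym2 V)} {S : Set V} {u v : V}
    (huv : (fromEdgeSet (G.edgeSet \ A)).Reachable u v) (hu : u ∈ S) (hv : v ∉ S) :
    ∃ e ∈ cutEdges G S, e ∉ A := by
  obtain ⟨d, -, hdS, hdS'⟩ := huv.some.exists_boundary_dart S hu hv
  obtain ⟨⟨hdG, hdA⟩, -⟩ := (fromEdgeSet_adj _).mp d.adj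
  exact ⟨s(d.fst, d.snd), ⟨hdG, d.fst, d.snd, rfl, hdS, hdS'⟩, hdA⟩

theorem disjoint_cutEdges_reachableSet (H : Set (Sym2 V)) (u : V) :
    Disjoint (cutEdges G {w | (fromEdgeSet H).Reachable u w}) H := by
  rw [Set.disjoint_left]
  rintro e ⟨heG, a, b, rfl, ha, hb⟩ heH
  exact hb (ha.trans (Adj.reachable ((fromEdgeSet_adj _).mpr ⟨heH, G.ne_of_adj heG⟩)))

theorem le_ncard_cutEdges_inter_of_lp_constraint {k : ℕ} {F' : Set (Sym2 V)} {x : Sym2 V → ℝ}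
    {S : Set V} (hint : ∀ e ∈ cutEdges G S \ F', x e = 0 ∨ x e = 1)
    (hcon : (((min k (cutEdges G S).ncard : ℤ) - ((cutEdges G S ∩ F').ncard : ℤ) : ℤ) : ℝ) ≤
      ∑ᶠ e ∈ (cutEdges G S \ F'), x e)
    (hk : k < (cutEdges G S).ncard) :
    k ≤ (cutEdges G S ∩ ({e | e ∈ G.edgeSet \ F' ∧ x e = 1} ∪ F')).ncard := by
  have hfin : (cutEdges G S).Finite := Set.finite_of_ncard_pos (by omega)
  have hsplit : cutEdges G S ∩ ({e | e ∈ G.edgeSet \ F' ∧ x e = 1} ∪ F') =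
      (cutEdges G S \ F') ∩ {e | x e = 1} ∪ cutEdges G S ∩ F' := by
    ext e
    constructor
    · rintro ⟨he, ⟨⟨-, heF⟩, hx⟩ | heF⟩
      exacts [Or.inl ⟨⟨he, heF⟩, hx⟩, Or.inr ⟨he, heF⟩]
    · rintro (⟨⟨he, heF⟩, hx⟩ | ⟨he, heF⟩)
      exacts [⟨he, Or.inl ⟨⟨he.1, heF⟩, hx⟩⟩, ⟨he, Or.inr heF⟩]
  have hdisj : Disjoint ((cutEdges G S \ F') ∩ {e | x e = 1}) (cutEdges G S ∩ F') :=
    Set.disjoint_left.mpr fun e he he' => he.1.2 he'.2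
  rw [min_eq_left (by exact_mod_cast hk.le),
    finsum_mem_eq_ncard_of_forall_eq_zero_or_one hfin.sdiff hint] at hcon
  rw [hsplit, Set.ncard_union_eq hdisj (hfin.sdiff.inter_of_left _) (hfin.inter_of_left _)]
  push_cast at hcon
  have : (k : ℝ) ≤ _ + _ := sub_le_iff_le_add.mp hcon
  exact_mod_cast this

end SimpleGraph

theorem stmt7_general {V : Type*} [Fintype V] (G : SimpleGraph V) (k : ℕ)
    (F' : Set (Sym2 V))
    (hF' : ∀ S : Set V, (cutEdges G S).ncard ≤ k → cutEdges G S ⊆ F')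
    (x : Sym2 V → ℝ)
    (hint : ∀ e ∈ G.edgeSet \ F', x e = 0 ∨ x e = 1)
    (hcon : ∀ S : Set V,
      (((min k (cutEdges G S).ncard : ℤ) - ((cutEdges G S ∩ F').ncard : ℤ) : ℤ) : ℝ) ≤
        ∑ᶠ e ∈ (cutEdges G S \ F'), x e) :
    ∀ A ⊆ G.edgeSet, A.ncard < k → ∀ u v : V,
      (fromEdgeSet (G.edgeSet \ A)).Reachable u v →
      (fromEdgeSet (({e | e ∈ G.edgeSet \ F' ∧ x e = 1} ∪ F') \ A)).Reachable u v := by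
  intro A _ hAk u v huv
  set H := {e | e ∈ G.edgeSet \ F' ∧ x e = 1} ∪ F'
  by_contra hv
  set S := {w | (fromEdgeSet (H \ A)).Reachable u w}
  have hcutA : cutEdges G S ∩ H ⊆ A := fun e ⟨he, heH⟩ => by
    by_contra heA
    exact Set.disjoint_left.mp (G.disjoint_cutEdges_reachableSet (H \ A) u) he ⟨heH, heA⟩
  obtain ⟨e, he, heA⟩ :=
    G.exists_mem_cutEdges_of_reachable huv (Reachable.refl u) (show v ∉ S from hv)
  by_cases hsmall : (cutEdges G S).ncard ≤ k
  · exact heA (hcutA ⟨he, Or.inr (hF' S hsmall he)⟩)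
  · have hk := G.le_ncard_cutEdges_inter_of_lp_constraint
      (fun e he => hint e ⟨he.1.1, he.2⟩) (hcon S) (not_le.mp hsmall)
    exact hAk.not_ge (hk.trans (Set.ncard_le_ncard hcutA (Set.toFinite A)))

/-- If `x` is an integral solution of the LP for the residual cut requirement
`f_{F'}(S) = min(k,|δ_G(S)|) − |δ_G(S) ∩ F'|` (with `F'` containing every edge lying in
a cut of size at most `k`), then `{e : x_e = 1} ∪ F'` is a `k`-EFTS of `G`. -/
theorem stmt7 {V : Type*} [Fintype V] (G : SimpleGraph V) (k : ℕ)
    (F' : Set (Sym2 V)) (hF'sub : F' ⊆ G.edgeSet)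
    (hF' : ∀ S : Set V, (cutEdges G S).ncard ≤ k → cutEdges G S ⊆ F')
    (x : Sym2 V → ℝ)
    (hint : ∀ e ∈ G.edgeSet \ F', x e = 0 ∨ x e = 1)
    (hcon : ∀ S : Set V,
      (((min k (cutEdges G S).ncard : ℤ) - ((cutEdges G S ∩ F').ncard : ℤ) : ℤ) : ℝ) ≤
        ∑ᶠ e ∈ (cutEdges G S \ F'), x e) :
    ∀ A ⊆ G.edgeSet, A.ncard < k → ∀ u v : V,
      (fromEdgeSet (G.edgeSet \ A)).Reachable u v →
      (fromEdgeSet (({e | e ∈ G.edgeSet \ F' ∧ x e = 1} ∪ F') \ A)).Reachable u v :=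
  stmt7_general G k F' hF' x hint hcon
end

section
/- Let g : 2^V → ℤ and let x be a feasible point of the LP {Σ_{e∈δ_G(S)} x_e ≥ g(S) ∀S, 0 ≤ x ≤ 1}. Call S tight if Σ_{e∈δ_G(S)} x_e = g(S). Suppose g satisfies: for tight A, B, either (A\B and B\A are tight and χ_{δ(A)} + χ_{δ(B)} = χ_{δ(A\B)} + χ_{δ(B\A)} as vectors) or (A∩B and A∪B are tight and χ_{δ(A)} + χ_{δ(B)} = χ_{δ(A∩B)} + χ_{δ(A∪B)}). Then for any maximal laminar family L of tight sets, span{χ_{δ(S)} : S ∈ L} = span{χ_{δ(S)} : S tight}. -/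
set_option maxHeartbeats 1000000

open SimpleGraph

private lemma uncross_aux {V : Type*} (S T R : Set V)
    (h1 : (S ∩ T).Nonempty) (h2 : ¬ S ⊆ T) (h3 : ¬ T ⊆ S)
    (hRT : R ∩ T = ∅ ∨ R ⊆ T ∨ T ⊆ R)
    (hRS : R ∩ S = ∅ ∨ R ⊆ S ∨ S ⊆ R) :
    (R ∩ (S ∩ T) = ∅ ∨ R ⊆ S ∩ T ∨ S ∩ T ⊆ R) ∧
    (R ∩ (S ∪ T) = ∅ ∨ R ⊆ S ∪ T ∨ S ∪ T ⊆ R) ∧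
    (R ∩ (S \ T) = ∅ ∨ R ⊆ S \ T ∨ S \ T ⊆ R) ∧
    (R ∩ (T \ S) = ∅ ∨ R ⊆ T \ S ∨ T \ S ⊆ R) := by
  obtain ⟨w, hwS, hwT⟩ := h1
  simp only [Set.eq_empty_iff_forall_notMem, Set.subset_def, Set.mem_inter_iff,
    Set.mem_union, Set.mem_diff, not_and] at *
  rcases hRT with h | h | h <;> rcases hRS with h' | h' | h'
  · exact ⟨Or.inl (by tauto), Or.inl (by tauto), Or.inl (by tauto), Or.inl (by tauto)⟩
  · exact ⟨Or.inl (by tauto), Or.inr (Or.inl (by tauto)), Or.inr (Or.inl (by tauto)),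
      Or.inl (by tauto)⟩
  · exact absurd hwT (h w (h' w hwS))
  · exact ⟨Or.inl (by tauto), Or.inr (Or.inl (by tauto)), Or.inl (by tauto),
      Or.inr (Or.inl (by tauto))⟩
  · exact ⟨Or.inr (Or.inl (by tauto)), Or.inr (Or.inl (by tauto)), Or.inl (by tauto),
      Or.inl (by tauto)⟩
  · exact absurd (fun x hx => h x (h' x hx)) h2
  · exact absurd hwS (h' w (h w hwT))
  · exact absurd (fun x hx => h' x (h x hx)) h3
  · exact ⟨Or.inr (Or.inr (by tauto)), Or.inr (Or.inr (by tauto)),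
      Or.inr (Or.inr (by tauto)), Or.inr (Or.inr (by tauto))⟩

/-- Jain's spanning lemma: if tight sets can always be uncrossed (as in the conclusion of
the uncrossing lemma), then any maximal laminar family of tight sets spans the same
vector space as the family of all tight sets. -/
theorem stmt11 {V : Type*} [Fintype V] (G : SimpleGraph V) (g : Set V → ℤ)
    (x : Sym2 V → ℝ)
    (hfeas : ∀ S : Set V, (g S : ℝ) ≤ ∑ᶠ e ∈ cutEdges G S, x e)
    (hbox : ∀ e, 0 ≤ x e ∧ x e ≤ 1)
    (Tight : Set V → Prop)
    (hTight : ∀ S, Tight S ↔ (∑ᶠ e ∈ cutEdges G S, x e) = (g S : ℝ))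
    (chi : Set V → Sym2 V → ℝ)
    (hchi : ∀ S, chi S = Set.indicator (cutEdges G S) (fun _ => (1 : ℝ)))
    (huncross : ∀ A B, Tight A → Tight B →
      (Tight (A \ B) ∧ Tight (B \ A) ∧
        chi A + chi B = chi (A \ B) + chi (B \ A)) ∨
      (Tight (A ∩ B) ∧ Tight (A ∪ B) ∧
        chi A + chi B = chi (A ∩ B) + chi (A ∪ B)))
    (L : Set (Set V))
    (hLT : ∀ S ∈ L, Tight S)
    (hLlam : ∀ A ∈ L, ∀ B ∈ L, A ∩ B = ∅ ∨ A ⊆ B ∨ B ⊆ A)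
    (hLmax : ∀ S, Tight S → (∀ T ∈ L, S ∩ T = ∅ ∨ S ⊆ T ∨ T ⊆ S) → S ∈ L) :
    Submodule.span ℝ (chi '' L) = Submodule.span ℝ (chi '' {S | Tight S}) := by
  classical
  set K : Set V → Set (Set V) :=
    fun S => {T | T ∈ L ∧ ¬ (S ∩ T = ∅ ∨ S ⊆ T ∨ T ⊆ S)} with hKdef
  have hKfin : ∀ S, (K S).Finite := fun S => Set.toFinite _
  -- if S is tight and crosses nothing in L, then S ∈ L
  have hzero : ∀ S, Tight S → K S = ∅ → chi S ∈ Submodule.span ℝ (chi '' L) := by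
    intro S hS hK0
    have hSL : S ∈ L := by
      apply hLmax S hS
      intro T hT
      by_contra hc
      have : T ∈ K S := ⟨hT, hc⟩
      rw [hK0] at this
      exact this
    exact Submodule.subset_span ⟨S, hSL, rfl⟩
  have key : ∀ n, ∀ S, Tight S → (K S).ncard ≤ n →
      chi S ∈ Submodule.span ℝ (chi '' L) := by
    intro n
    induction n with
    | zero =>
      intro S hS hle
      exact hzero S hS ((Set.ncard_eq_zero (hKfin S)).mp (Nat.le_zero.mp hle))
    | succ n ih =>
      intro S hS hle
      by_cases h0 : K S = ∅
      · exact hzero S hS h0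
      · obtain ⟨T, hTL, hTc⟩ :=  Set.nonempty_iff_ne_empty.mpr h0
        push_neg at hTc
        obtain ⟨h1', h2, h3⟩ := hTc
        have h1 : (S ∩ T).Nonempty := h1'
        -- crossing count strictly decreases for any uncrossed set
        have hdec : ∀ A : Set V,
            (∀ R, (R ∩ T = ∅ ∨ R ⊆ T ∨ T ⊆ R) → (R ∩ S = ∅ ∨ R ⊆ S ∨ S ⊆ R) →
              (R ∩ A = ∅ ∨ R ⊆ A ∨ A ⊆ R)) →
            (A ∩ T = ∅ ∨ A ⊆ T ∨ T ⊆ A) →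
            (K A).ncard ≤ n := by
          intro A hcomp hAT
          have hTKS : T ∈ K S := ⟨hTL, by push_neg; exact ⟨h1', h2, h3⟩⟩
          have hTKA : T ∉ K A := fun h => h.2 hAT
          have hsub : K A ⊆ K S := by
            rintro R ⟨hRL, hRc⟩
            refine ⟨hRL, ?_⟩
            intro hns
            have hRS : R ∩ S = ∅ ∨ R ⊆ S ∨ S ⊆ R := by
              rw [Set.inter_comm]; tauto
            have hRT : R ∩ T = ∅ ∨ R ⊆ T ∨ T ⊆ R := hLlam R hRL T hTL
            have := hcomp R hRT hRS
            exact hRc (by rw [Set.inter_comm]; tauto)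
          have hss : K A ⊂ K S := ⟨hsub, fun hcon => hTKA (hcon hTKS)⟩
          have := Set.ncard_lt_ncard hss (hKfin S)
          omega
        rcases huncross S T hS (hLT T hTL) with ⟨hA, hB, heq⟩ | ⟨hA, hB, heq⟩
        · -- S \ T and T \ S
          have mA := ih (S \ T) hA (hdec (S \ T)
            (fun R hRT hRS => (uncross_aux S T R h1 h2 h3 hRT hRS).2.2.1)
            (Or.inl (Set.diff_inter_self)))
          have mB := ih (T \ S) hB (hdec (T \ S)
            (fun R hRT hRS => (uncross_aux S T R h1 h2 h3 hRT hRS).2.2.2)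
            (Or.inr (Or.inl Set.diff_subset)))
          have mT : chi T ∈ Submodule.span ℝ (chi '' L) :=
            Submodule.subset_span ⟨T, hTL, rfl⟩
          have hSeq : chi S = chi (S \ T) + chi (T \ S) - chi T := by
            rw [← heq]; abel
          rw [hSeq]
          exact Submodule.sub_mem _ (Submodule.add_mem _ mA mB) mT
        · -- S ∩ T and S ∪ T
          have mA := ih (S ∩ T) hA (hdec (S ∩ T)
            (fun R hRT hRS => (uncross_aux S T R h1 h2 h3 hRT hRS).1)
            (Or.inr (Or.inl Set.inter_subset_right)))
          have mB := ih (S ∪ T) hB (hdec (S ∪ T)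
            (fun R hRT hRS => (uncross_aux S T R h1 h2 h3 hRT hRS).2.1)
            (Or.inr (Or.inr Set.subset_union_right)))
          have mT : chi T ∈ Submodule.span ℝ (chi '' L) :=
            Submodule.subset_span ⟨T, hTL, rfl⟩
          have hSeq : chi S = chi (S ∩ T) + chi (S ∪ T) - chi T := by
            rw [← heq]; abel
          rw [hSeq]
          exact Submodule.sub_mem _ (Submodule.add_mem _ mA mB) mT
  apply le_antisymm
  · exact Submodule.span_mono (Set.image_mono (fun S hS => hLT S hS))
  · rw [Submodule.span_le]
    rintro _ ⟨S, hS, rfl⟩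
    exact key ((K S).ncard) S hS le_rfl
end

section
/- Let G = (V,E) be a graph, k ∈ ℕ, and let n_h be the number of vertices of degree ≥ k in G. Then every k-EFTS H of G satisfies |H| ≥ k·n_h/2. -/
open SimpleGraph

/-- Every `k`-EFTS `H` of `G` satisfies `|H| ≥ k·n_h/2`, where `n_h` is the number of
vertices of degree at least `k` in `G`. -/
theorem stmt16 {V : Type*} [Fintype V] (G : SimpleGraph V) [DecidableRel G.Adj] (k : ℕ)
    (H : Set (Sym2 V)) (hH : H ⊆ G.edgeSet)
    (hEFTS : ∀ A ⊆ G.edgeSet, A.ncard < k → ∀ u v : V,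
      (fromEdgeSet (G.edgeSet \ A)).Reachable u v →
      (fromEdgeSet (H \ A)).Reachable u v) :
    k * {v : V | k ≤ G.degree v}.ncard ≤ 2 * H.ncard := by
  classical
  set H' : SimpleGraph V := fromEdgeSet H with hH'
  have heS : H'.edgeSet = H := by
    rw [hH', edgeSet_fromEdgeSet]
    ext e
    simp only [Set.mem_diff, Set.mem_setOf_eq, and_iff_left_iff_imp]
    intro he
    exact G.not_isDiag_of_mem_edgeSet (hH he)
  -- every vertex of degree ≥ k in G has degree ≥ k in H'
  have hdeg : ∀ v : V, k ≤ G.degree v → k ≤ H'.degree v := by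
    intro v hv
    by_contra hlt
    push_neg at hlt
    set A : Set (Sym2 V) := H'.incidenceSet v with hA
    have hAsub : A ⊆ G.edgeSet := fun e he => hH (heS ▸ he.1)
    have hAcard : A.ncard = H'.degree v := by
      rw [Set.ncard_eq_toFinset_card']
      have : A.toFinset = H'.incidenceFinset v := by
        simp [incidenceFinset, hA]
      rw [this, card_incidenceFinset_eq_degree]
    have hAlt : A.ncard < k := hAcard ▸ hlt
    -- find an edge of G at v not in A
    have hex : ∃ e ∈ G.incidenceSet v, e ∉ A := by
      by_contra hc
      push_neg at hc
      have hsub : G.incidenceFinset v ⊆ A.toFinset := by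
        intro e he
        rw [mem_incidenceFinset] at he
        exact Set.mem_toFinset.mpr (hc e he)
      have := Finset.card_le_card hsub
      rw [card_incidenceFinset_eq_degree, ← Set.ncard_eq_toFinset_card'] at this
      omega
    obtain ⟨e, heInc, heA⟩ := hex
    obtain ⟨heE, hve⟩ := heInc
    obtain ⟨u, rfl⟩ := Sym2.mem_iff_exists.mp hve
    have hadjG : G.Adj v u := (mem_edgeSet G).mp heE
    have hne : v ≠ u := hadjG.ne
    have hreach : (fromEdgeSet (G.edgeSet \ A)).Reachable v u := by
      refine Adj.reachable ?_
      rw [fromEdgeSet_adj]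
      exact ⟨⟨heE, heA⟩, hne⟩
    have hreach' := hEFTS A hAsub hAlt v u hreach
    obtain ⟨w⟩ := hreach'
    cases w with
    | nil => exact hne rfl
    | cons hadj p =>
      rw [fromEdgeSet_adj] at hadj
      obtain ⟨⟨heH, heA'⟩, _⟩ := hadj
      exact heA' ⟨heS ▸ heH, Sym2.mem_mk_left _ _⟩
  -- counting
  set S : Finset V := {v : V | k ≤ G.degree v}.toFinset with hS
  have hncard : {v : V | k ≤ G.degree v}.ncard = S.card := Set.ncard_eq_toFinset_card' _
  have hHcard : H.ncard = H'.edgeFinset.card := by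
    rw [← Set.ncard_coe_finset, coe_edgeFinset, heS]
  rw [hncard, hHcard]
  calc k * S.card = ∑ _v ∈ S, k := by rw [Finset.sum_const, smul_eq_mul, Nat.mul_comm]
    _ ≤ ∑ v ∈ S, H'.degree v := by
        refine Finset.sum_le_sum fun v hvS => ?_
        rw [hS, Set.mem_toFinset] at hvS
        exact hdeg v hvS
    _ ≤ ∑ v, H'.degree v := Finset.sum_le_sum_of_subset (Finset.subset_univ S)
    _ = 2 * H'.edgeFinset.card := by
        convert H'.sum_degrees_eq_twice_card_edges using 4
end

section
/- Let G = (V,E) with s,t ∈ V, and let R_0, S_0, R_1, S_1, ..., R_p be the s-t 2-chain of a 2-edge-connected graph G (each S_i an important separator of size 2). Suppose H ⊆ G contains all separator edges ∪ S_i, and suppose for every i that within H[R_i] every vertex of V_{(i,r)} is reachable from V_{(i,ℓ)} and every vertex of V_{(i,ℓ)} can reach V_{(i,r)} whenever the corresponding reachability holds in G[R_i]. Then for any i ≤ j, every vertex of V_{(j,r)} is reachable in H from V_{(i,ℓ)}, using only edges in the subchain from H[R_i] to H[R_j] and the intervening separators. -/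
open SimpleGraph

/-- Subchain connectivity of `H` (Lemma `no_faults_H`): if `H` contains all separator
edges of the `s-t` 2-chain `R_0, S_0, R_1, …, R_p` of a 2-edge-connected graph `G`, and
within every `H[R_m]` the `V_{(m,ℓ)}`–`V_{(m,r)}` reachability of `G[R_m]` is preserved,
then for all `i ≤ j ≤ p` every vertex of `V_{(j,r)}` is reachable in `H` from `V_{(i,ℓ)}`
using only edges of the subchain from `R_i` to `R_j` and the intervening separators. -/
theorem stmt19 {V : Type*} [Fintype V] (G : SimpleGraph V) (s t : V) (p : ℕ)
    (R : ℕ → Set V) (Sep : ℕ → Set (Sym2 V)) (Vl Vr : ℕ → Set V)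
    -- G is 2-edge-connected
    (h2ec : ∀ S : Set V, S.Nonempty → Sᶜ.Nonempty → 2 ≤ (cutEdges G S).ncard)
    -- the components R_0, …, R_p partition V, with s ∈ R_0 and t ∈ R_p
    (hdisj : ∀ m ≤ p, ∀ m' ≤ p, m ≠ m' → Disjoint (R m) (R m'))
    (hcover : ∀ v : V, ∃ m ≤ p, v ∈ R m)
    (hs : s ∈ R 0) (ht : t ∈ R p)
    -- the boundary vertex sets V_{(m,ℓ)} and V_{(m,r)}
    (hVl0 : Vl 0 = {s})
    (hVl : ∀ m, 0 < m → m ≤ p → Vl m = {v ∈ R m | ∃ e ∈ Sep (m - 1), v ∈ e})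
    (hVrp : Vr p = {t})
    (hVr : ∀ m < p, Vr m = {v ∈ R m | ∃ e ∈ Sep m, v ∈ e})
    -- each S_m is a set of 2 edges of G going between R_m and R_{m+1},
    -- and every edge of G lies inside some component or in some separator
    (hsepsub : ∀ m < p, Sep m ⊆ G.edgeSet)
    (hsepcard : ∀ m < p, (Sep m).ncard = 2)
    (hsepcross : ∀ m < p, ∀ e ∈ Sep m, ∃ u v, e = s(u, v) ∧ u ∈ R m ∧ v ∈ R (m + 1))
    (hedges : ∀ e ∈ G.edgeSet, (∃ m ≤ p, ∀ w ∈ e, w ∈ R m) ∨ ∃ m < p, e ∈ Sep m)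
    -- each S_m is a minimal (V_{(m,ℓ)}, t)-separator of G minus the earlier components
    (hsep : ∀ m < p, ∀ u ∈ Vl m,
      ¬ (fromEdgeSet ({e ∈ G.edgeSet | ∀ w ∈ e, ∀ j < m, w ∉ R j} \ Sep m)).Reachable u t)
    (hmin : ∀ m < p, ∀ T ⊂ Sep m, ∃ u ∈ Vl m,
      (fromEdgeSet ({e ∈ G.edgeSet | ∀ w ∈ e, ∀ j < m, w ∉ R j} \ T)).Reachable u t)
    -- the subgraph H: contains all separator edges, and preserves the boundary-to-boundary
    -- reachability of G inside each component
    (H : Set (Sym2 V)) (hH : H ⊆ G.edgeSet)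
    (hHsep : ∀ m < p, Sep m ⊆ H)
    (hHloc : ∀ m ≤ p,
      (∀ v ∈ Vr m,
        (∃ u ∈ Vl m, (fromEdgeSet {e ∈ G.edgeSet | ∀ w ∈ e, w ∈ R m}).Reachable u v) →
        (∃ u ∈ Vl m, (fromEdgeSet {e ∈ H | ∀ w ∈ e, w ∈ R m}).Reachable u v)) ∧
      (∀ u ∈ Vl m,
        (∃ v ∈ Vr m, (fromEdgeSet {e ∈ G.edgeSet | ∀ w ∈ e, w ∈ R m}).Reachable u v) →
        (∃ v ∈ Vr m, (fromEdgeSet {e ∈ H | ∀ w ∈ e, w ∈ R m}).Reachable u v))) :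
    ∀ i j, i ≤ j → j ≤ p → ∀ v ∈ Vr j, ∃ u ∈ Vl i,
      (fromEdgeSet ({e ∈ H | ∃ m, i ≤ m ∧ m ≤ j ∧ ∀ w ∈ e, w ∈ R m} ∪
        {e | ∃ m, i ≤ m ∧ m < j ∧ e ∈ Sep m})).Reachable u v := by
  classical
  -- basic disjointness helper
  have hRdisj : ∀ a, a ≤ p → ∀ b, b ≤ p → a ≠ b → ∀ x, x ∈ R a → x ∈ R b → False := by
    intro a ha b hb hne x hxa hxb
    exact Set.disjoint_left.mp (hdisj a ha b hb hne) hxa hxb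
  -- reachability inside R m stays inside R m
  have hreachmem : ∀ (A : Set V) (E : Set (Sym2 V)), (∀ e ∈ E, ∀ w ∈ e, w ∈ A) →
      ∀ x y : V, x ∈ A → (fromEdgeSet E).Reachable x y → y ∈ A := by
    intro A E hE x y hx hxy
    obtain ⟨w⟩ := hxy
    have : ∀ x y : V, (fromEdgeSet E).Walk x y → x ∈ A → y ∈ A := by
      intro x y w
      induction w with
      | nil => exact id
      | @cons a b c h w ih =>
        intro ha
        rw [fromEdgeSet_adj] at h
        exact ih (hE _ h.1 b (by simp))
    exact this x y w hx
  -- Key lemma A: inside G[R m], every vertex of Vr m is reachable from Vl m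
  have keyA : ∀ m, m ≤ p → ∀ v ∈ Vr m,
      ∃ u ∈ Vl m, (fromEdgeSet {e | e ∈ G.edgeSet ∧ ∀ w ∈ e, w ∈ R m}).Reachable u v := by
    intro m hmp v hv
    by_contra hcon
    push_neg at hcon
    set ERm : Set (Sym2 V) := {e | e ∈ G.edgeSet ∧ ∀ w ∈ e, w ∈ R m} with hERm
    have hERmem : ∀ e ∈ ERm, ∀ w ∈ e, w ∈ R m := fun e he => he.2
    have hVlR : Vl m ⊆ R m := by
      rcases Nat.eq_zero_or_pos m with h0 | h0
      · subst h0; rw [hVl0]; intro x hx; simp at hx; subst hx; exact hs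
      · rw [hVl m h0 hmp]; exact fun x hx => hx.1
    -- v ∈ R m
    have hvR : v ∈ R m := by
      rcases Nat.lt_or_ge m p with hlt | hge
      · rw [hVr m hlt] at hv; exact hv.1
      · have : m = p := le_antisymm hmp hge
        subst this
        rw [hVrp] at hv; simp at hv; subst hv; exact ht
    set C : Set V := {x | (fromEdgeSet ERm).Reachable v x} with hC
    have hvC : v ∈ C := ⟨.nil⟩
    have hCR : C ⊆ R m := fun x hx => hreachmem _ _ hERmem v x hvR hx
    have hVlC : ∀ u ∈ Vl m, u ∉ C := by
      intro u hu huC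
      exact hcon u hu ((Reachable.symm huC))
    -- Vl m is nonempty
    have hVlne : (Vl m).Nonempty := by
      rcases Nat.eq_zero_or_pos m with h0 | h0
      · subst h0; rw [hVl0]; exact ⟨s, rfl⟩
      · have hm1 : m - 1 < p := by omega
        have : (Sep (m-1)).Nonempty := by
          apply Set.nonempty_of_ncard_ne_zero; rw [hsepcard _ hm1]; omega
        obtain ⟨e, he⟩ := this
        obtain ⟨a, b, hab, ha, hb⟩ := hsepcross _ hm1 e he
        have : m - 1 + 1 = m := by omega
        rw [this] at hb
        exact ⟨b, by rw [hVl m h0 hmp]; exact ⟨hb, e, he, by rw [hab]; simp⟩⟩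
    obtain ⟨u₀, hu₀⟩ := hVlne
    have hCcne : Cᶜ.Nonempty := ⟨u₀, hVlC u₀ hu₀⟩
    have h2 := h2ec C ⟨v, hvC⟩ hCcne
    -- analysis of cut edges of C
    have hcutsep : ∀ e ∈ cutEdges G C, m < p ∧ e ∈ Sep m := by
      intro e he
      obtain ⟨heG, a, b, hab, haC, hbC⟩ := he
      have haR : a ∈ R m := hCR haC
      rcases hedges e heG with ⟨m', hm'p, hin⟩ | ⟨m', hm'p, hsepm⟩
      · -- edge inside some R m' : contradiction
        exfalso
        have ham' : a ∈ R m' := hin a (by rw [hab]; simp)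
        have hmm' : m' = m := by
          by_contra hne
          exact hRdisj m' hm'p m hmp hne a ham' haR
        subst hmm'
        have hne : a ≠ b := G.ne_of_adj (by rwa [← mem_edgeSet, ← hab])
        have : (fromEdgeSet ERm).Adj a b := by
          rw [fromEdgeSet_adj]
          exact ⟨by rw [← hab]; exact ⟨heG, hin⟩, hne⟩
        exact hbC (haC.trans this.reachable)
      · -- edge in Sep m'
        obtain ⟨c, d, hcd, hcR, hdR⟩ := hsepcross m' hm'p e hsepm
        rw [hab] at hcd
        have hac : a = c ∨ a = d := by
          have : a ∈ s(c, d) := by rw [← hcd]; simp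
          simpa using this
        rcases hac with hac | had
        · subst hac
          have : m' = m := by
            by_contra hne
            exact hRdisj m' (le_of_lt hm'p) m hmp hne a hcR haR
          subst this
          exact ⟨hm'p, hsepm⟩
        · subst had
          -- a ∈ R (m'+1), so m'+1 = m and a ∈ Vl m, contradicting a ∈ C
          exfalso
          have hm1 : m' + 1 = m := by
            by_contra hne
            exact hRdisj (m'+1) hm'p m hmp hne a hdR haR
          have h0 : 0 < m := by omega
          have haVl : a ∈ Vl m := by
            rw [hVl m h0 hmp]
            refine ⟨haR, e, ?_, by rw [hab]; simp⟩
            have : m - 1 = m' := by omega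
            rw [this]; exact hsepm
          exact hVlC a haVl haC
    -- case m = p : no cut edges at all, contradiction
    rcases Nat.lt_or_ge m p with hmlt | hge
    swap
    · have hmeq : m = p := le_antisymm hmp hge
      have : cutEdges G C = ∅ := by
        ext e; simp only [Set.mem_empty_iff_false, iff_false]
        intro he
        exact absurd (hcutsep e he).1 (by omega)
      rw [this] at h2; simp at h2
    -- case m < p : cutEdges G C = Sep m, then path argument using hmin
    · have hsub : cutEdges G C ⊆ Sep m := fun e he => (hcutsep e he).2
      have heq : cutEdges G C = Sep m := by
        apply Set.eq_of_subset_of_ncard_le hsub _ (Set.toFinite _)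
        rw [hsepcard m hmlt]; exact h2
      -- every Sep m edge has its R m endpoint in C
      have hsepC : ∀ e ∈ Sep m, ∃ a b, e = s(a, b) ∧ a ∈ C ∧ b ∈ R (m+1) := by
        intro e he
        have hecut : e ∈ cutEdges G C := by rw [heq]; exact he
        obtain ⟨heG, a, b, hab, haC, hbC⟩ := hecut
        obtain ⟨c, d, hcd, hcR, hdR⟩ := hsepcross m hmlt e he
        refine ⟨c, d, hcd, ?_, hdR⟩
        rw [hab] at hcd
        rcases Sym2.eq_iff.mp hcd with ⟨h1, h2'⟩ | ⟨h1, h2'⟩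
        · rwa [← h1]
        · exfalso
          have : a ∈ R (m+1) := by rw [h1]; exact hdR
          exact hRdisj m hmp (m+1) hmlt (by omega) a (hCR haC) this
      -- hmin with T = ∅ gives a path from some u ∈ Vl m to t avoiding earlier comps
      have hSepne : (Sep m).Nonempty := by
        apply Set.nonempty_of_ncard_ne_zero; rw [hsepcard m hmlt]; omega
      obtain ⟨u, hu, hreach⟩ := hmin m hmlt ∅ (Set.empty_ssubset.mpr hSepne)
      rw [Set.diff_empty] at hreach
      set E' : Set (Sym2 V) := {e | e ∈ G.edgeSet ∧ ∀ w ∈ e, ∀ j < m, w ∉ R j} with hE'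
      have hwalk : ∀ x y, (fromEdgeSet E').Walk x y → y ∈ R p →
          (fromEdgeSet ERm).Reachable u x → False := by
        intro x y w
        induction w with
        | nil =>
          intro hyR hx
          have : _ ∈ R m := hreachmem _ _ hERmem u _ (hVlR hu) hx
          exact hRdisj m hmp p le_rfl (by omega) _ this hyR
        | @cons x y z h w ih =>
          intro hzR hx
          rw [fromEdgeSet_adj] at h
          obtain ⟨⟨heG, hav⟩, hne⟩ := h
          have hxR : x ∈ R m := hreachmem _ _ hERmem u x (hVlR hu) hx
          rcases hedges s(x,y) heG with ⟨m', hm'p, hin⟩ | ⟨m', hm'p, hsepm⟩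
          · have hmm' : m' = m := by
              by_contra hne'
              exact hRdisj m' hm'p m hmp hne' x (hin x (by simp)) hxR
            subst hmm'
            have hadj : (fromEdgeSet ERm).Adj x y := by
              rw [fromEdgeSet_adj]; exact ⟨⟨heG, hin⟩, hne⟩
            exact ih hzR (hx.trans hadj.reachable)
          · -- a separator edge: must be in Sep m (earlier comps are excluded)
            obtain ⟨c', d', hcd, hcR, hdR⟩ := hsepcross m' hm'p _ hsepm
            have hxc : x = c' ∨ x = d' := by
              have : x ∈ s(c', d') := by rw [← hcd]; simp
              simpa using this
            have hm'm : m' = m := by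
              rcases hxc with h1 | h1
              · by_contra hne'
                exact hRdisj m' (le_of_lt hm'p) m hmp hne' x (h1 ▸ hcR) hxR
              · exfalso
                have hm1 : m' + 1 = m := by
                  by_contra hne'
                  exact hRdisj (m'+1) hm'p m hmp hne' x (h1 ▸ hdR) hxR
                have : c' ∉ R m' := hav c' (by rw [hcd]; simp) m' (by omega)
                exact this hcR
            rw [hm'm] at hsepm
            -- the R m endpoint of this Sep m edge is in C, but it is x
            obtain ⟨a', b', hab', ha'C, hb'R⟩ := hsepC _ hsepm
            have hxa' : x = a' := by
              rcases Sym2.eq_iff.mp hab' with ⟨h1, h2'⟩ | ⟨h1, h2'⟩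
              · exact h1
              · exfalso
                exact hRdisj m hmp (m+1) hmlt (by omega) x hxR (h1 ▸ hb'R)
            have hxC : x ∈ C := hxa' ▸ ha'C
            exact hcon u hu (hx.trans (Reachable.symm hxC))
      obtain ⟨w⟩ := hreach
      exact hwalk u t w ht (Reachable.refl u)
  -- Main induction along the chain
  intro i j hij
  induction j, hij using Nat.le_induction with
  | base =>
    intro hip v hv
    obtain ⟨u, hu, hr⟩ := (hHloc i hip).1 v hv (keyA i hip v hv)
    refine ⟨u, hu, hr.mono (fromEdgeSet_mono ?_)⟩
    intro e he
    exact Set.mem_union_left _ ⟨he.1, i, le_rfl, le_rfl, he.2⟩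
  | succ j hij ih =>
    intro hjp v hv
    have hjlt : j < p := by omega
    have hj1p : j + 1 ≤ p := hjp
    obtain ⟨u', hu', hrH⟩ := (hHloc (j+1) hj1p).1 v hv (keyA (j+1) hj1p v hv)
    have hu'mem := hu'
    rw [hVl (j+1) (by omega) hj1p] at hu'mem
    obtain ⟨hu'R, e, hesep, hu'e⟩ := hu'mem
    have hj1 : j + 1 - 1 = j := by omega
    rw [hj1] at hesep
    obtain ⟨a, b, hab, haR, hbR⟩ := hsepcross j hjlt e hesep
    have hu'b : u' = b := by
      rcases (by rw [hab] at hu'e; simpa using hu'e : u' = a ∨ u' = b) with h1 | h1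
      · exfalso; exact hRdisj j (le_of_lt hjlt) (j+1) hj1p (by omega) u' (h1 ▸ haR) hu'R
      · exact h1
    have haVr : a ∈ Vr j := by
      rw [hVr j hjlt]; exact ⟨haR, e, hesep, by rw [hab]; simp⟩
    obtain ⟨u, hu, hr1⟩ := ih (le_of_lt hjlt) a haVr
    refine ⟨u, hu, ?_⟩
    have hmono1 : ({e ∈ H | ∃ m, i ≤ m ∧ m ≤ j ∧ ∀ w ∈ e, w ∈ R m} ∪
        {e | ∃ m, i ≤ m ∧ m < j ∧ e ∈ Sep m} : Set (Sym2 V)) ⊆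
        ({e ∈ H | ∃ m, i ≤ m ∧ m ≤ j + 1 ∧ ∀ w ∈ e, w ∈ R m} ∪
        {e | ∃ m, i ≤ m ∧ m < j + 1 ∧ e ∈ Sep m}) := by
      intro x hx
      rcases hx with ⟨hxH, m, h1, h2, h3⟩ | ⟨m, h1, h2, h3⟩
      · exact Set.mem_union_left _ ⟨hxH, m, h1, by omega, h3⟩
      · exact Set.mem_union_right _ ⟨m, h1, by omega, h3⟩
    have hadj : (fromEdgeSet ({e ∈ H | ∃ m, i ≤ m ∧ m ≤ j + 1 ∧ ∀ w ∈ e, w ∈ R m} ∪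
        {e | ∃ m, i ≤ m ∧ m < j + 1 ∧ e ∈ Sep m})).Adj a u' := by
      rw [fromEdgeSet_adj]
      constructor
      · refine Set.mem_union_right _ ⟨j, hij, by omega, ?_⟩
        rw [hu'b, ← hab]; exact hesep
      · have : G.Adj a b := by rw [← mem_edgeSet, ← hab]; exact hsepsub j hjlt hesep
        rw [hu'b]; exact this.ne
    have hmono2 : ({e ∈ H | ∀ w ∈ e, w ∈ R (j+1)} : Set (Sym2 V)) ⊆
        ({e ∈ H | ∃ m, i ≤ m ∧ m ≤ j + 1 ∧ ∀ w ∈ e, w ∈ R m} ∪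
        {e | ∃ m, i ≤ m ∧ m < j + 1 ∧ e ∈ Sep m}) := by
      intro x hx
      exact Set.mem_union_left _ ⟨hx.1, j+1, by omega, le_rfl, hx.2⟩
    exact ((hr1.mono (fromEdgeSet_mono hmono1)).trans hadj.reachable).trans
      (hrH.mono (fromEdgeSet_mono hmono2))
end
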